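/- Let n, k be positive integers with 4 ≤ 2k ≤ n and G, H ⊆ [n] with |G| ≤ k, |H| ≤ k. Then the following are equivalent: (i) G and H are strongly intersecting; (ii) F(G) and F(H) are cross-intersecting; (iii) there exists l ∈ [n] with μ_G(l) + μ_H(l) > l. -/

import Mathlib

open Finset

/-- 1-indexed i-th smallest element of a finset of naturals (0 if out of range). -/
def nth (A : Finset ℕ) (i : ℕ) : ℕ := (A.sort (· ≤ ·)).getD (i - 1) 0

/-- Elementwise order on finsets of equal size: `A ≤ B`. -/
def eLE (A B : Finset ℕ) : Prop :=
  A.card = B.card ∧ ∀ i, 1 ≤ i → i ≤ B.card → nth A i ≤ nth B i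

/-- `A ⪯ B`: `|A| ≥ |B|` and the i-th smallest of `A` is ≤ the i-th smallest of `B` for `i ≤ |B|`. -/
def preceq (A B : Finset ℕ) : Prop :=
  B.card ≤ A.card ∧ ∀ i, 1 ≤ i → i ≤ B.card → nth A i ≤ nth B i

/-- `μ_X(l) = |X ∩ [l]|`. -/
def mu (X : Finset ℕ) (l : ℕ) : ℕ := (X ∩ Finset.Icc 1 l).card

/-- `G ∼_si H` (within `[n]`): every `G' ≤ G` and `H' ≤ H` with `G', H' ⊆ [n]` intersect. -/
def sInt (n : ℕ) (G H : Finset ℕ) : Prop :=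
  ∀ G' H' : Finset ℕ, G' ⊆ Finset.Icc 1 n → H' ⊆ Finset.Icc 1 n →
    eLE G' G → eLE H' H → (G' ∩ H').Nonempty

/-- `F(n,k,𝒢)`: the k-subsets `S` of `[n]` with `S ⪯ G` for some `G ∈ 𝒢`. -/
def Fam (n k : ℕ) (𝒢 : Set (Finset ℕ)) : Set (Finset ℕ) :=
  {S | S ⊆ Finset.Icc 1 n ∧ S.card = k ∧ ∃ G ∈ 𝒢, preceq S G}

/-- A family is intersecting if every two members (possibly equal) intersect. -/
def IsIntersecting (𝒜 : Set (Finset ℕ)) : Prop :=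
  ∀ A ∈ 𝒜, ∀ B ∈ 𝒜, (A ∩ B).Nonempty

/-- The type of `G`: the largest `r` with `g_r < k + r`. -/
def typeOf (k : ℕ) (G : Finset ℕ) : ℕ :=
  ((Finset.range (G.card + 1)).filter fun r => 1 ≤ r ∧ nth G r < k + r).sup id

/-- `π(G) = {g_1, …, g_r}` where `r` is the type of `G`. -/
def piG (k : ℕ) (G : Finset ℕ) : Finset ℕ :=
  ((G.sort (· ≤ ·)).take (typeOf k G)).toFinset


/-!
A set `A` lies below `G` (in `≤` or `⪯`) exactly when `|A| ≥ |G|` and `μ_A ≥ μ_G` pointwise.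
Hence if `μ_G(l) + μ_H(l) > l`, any `A` below `G` and `B` below `H` together have more than `l`
elements in `[l]` and must meet. Conversely, if `μ_G(l) + μ_H(l) ≤ l` for all `l`, merge `G` and
`H` into one increasing sequence (an element of `G ∩ H` taken first as a member of `G`) and replace
each element by its position in the merge. This moves every element down and produces disjoint
`G' ≤ G`, `H' ≤ H` inside `[n]`, which `2k ≤ n` lets us pad to disjoint `k`-sets.
-/

lemma getD_le_iff_lt_countP (l : ℕ) {s : List ℕ} (hs : s.Pairwise (· ≤ ·)) {j : ℕ}
    (hj : j < s.length) : s.getD j 0 ≤ l ↔ j < s.countP (· ≤ l) := by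
  induction s generalizing j with
  | nil => simp at hj
  | cons a t ih =>
    have ht := hs.of_cons
    rw [List.countP_cons]
    by_cases hal : a ≤ l
    · cases j with
      | zero => simp [hal]
      | succ j =>
        rw [List.getD_cons_succ, ih ht (by simpa using hj)]
        simp [hal]
    · have h0 : t.countP (· ≤ l) = 0 := List.countP_eq_zero.2 fun x hx hxl =>
        hal ((List.rel_of_pairwise_cons hs hx).trans (by simpa using hxl))
      cases j with
      | zero => simp [-List.countP_eq_zero, hal, h0]
      | succ j =>
        rw [List.getD_cons_succ, ih ht (by simpa using hj)]
        simp [h0, hal]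

section mu

variable {A B G H : Finset ℕ} {n l m x : ℕ}

lemma zero_notMem_of_subset_Icc_one (h : A ⊆ Icc 1 n) : 0 ∉ A :=
  fun h0 => by simpa using h h0

lemma mu_zero (A : Finset ℕ) : mu A 0 = 0 := by simp [mu]

lemma mu_mono (A : Finset ℕ) : Monotone (mu A) :=
  fun _ _ h => card_le_card (inter_subset_inter le_rfl (Icc_subset_Icc le_rfl h))

lemma mu_le_card (A : Finset ℕ) (l : ℕ) : mu A l ≤ #A :=
  card_le_card inter_subset_left

lemma mu_le_mu_of_subset (h : A ⊆ B) (l : ℕ) : mu A l ≤ mu B l :=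
  card_le_card (inter_subset_inter h le_rfl)

lemma mu_lt_mu_of_mem (hx : x ∈ A) (hm : m < x) : mu A m < mu A x := by
  refine card_lt_card ((ssubset_iff_of_subset
    (inter_subset_inter le_rfl (Icc_subset_Icc le_rfl hm.le))).2 ⟨x, ?_, ?_⟩) <;>
  simp [hx] <;> omega

lemma mu_pos_of_mem (hx : x ∈ A) (h0 : 0 < x) : 0 < mu A x :=
  mu_zero A ▸ mu_lt_mu_of_mem hx h0

lemma mu_eq_countP (hA : 0 ∉ A) (l : ℕ) :
    mu A l = (A.sort (· ≤ ·)).countP (· ≤ l) := by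
  have hfilter : ((A.sort (· ≤ ·)).filter (· ≤ l)).toFinset = A ∩ Icc 1 l := by
    ext x
    simp only [List.mem_toFinset, List.mem_filter, mem_sort, mem_inter, mem_Icc,
      decide_eq_true_eq]
    have : x ∈ A → 1 ≤ x := fun hx => Nat.one_le_iff_ne_zero.2 (ne_of_mem_of_not_mem hx hA)
    tauto
  rw [List.countP_eq_length_filter, mu, ← hfilter,
    List.toFinset_card_of_nodup ((sort_nodup _ _).filter _)]

lemma nth_le_iff_le_mu (hA : 0 ∉ A) {i : ℕ} (hi : 1 ≤ i) (hiA : i ≤ #A) (l : ℕ) :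
    nth A i ≤ l ↔ i ≤ mu A l := by
  rw [mu_eq_countP hA, nth,
    getD_le_iff_lt_countP l (pairwise_sort _ _) (by rw [length_sort]; omega)]
  omega

lemma forall_nth_le_iff_forall_mu_le (hA : 0 ∉ A) (hG : 0 ∉ G) (hcard : #G ≤ #A) :
    (∀ i, 1 ≤ i → i ≤ #G → nth A i ≤ nth G i) ↔ ∀ l, mu G l ≤ mu A l := by
  constructor
  · intro h l
    rcases Nat.eq_zero_or_pos (mu G l) with h0 | hpos
    · omega
    have hle := mu_le_card G l
    exact (nth_le_iff_le_mu hA hpos (hle.trans hcard) l).1 <|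
      (h _ hpos hle).trans ((nth_le_iff_le_mu hG hpos hle l).2 le_rfl)
  · intro h i hi hiG
    exact (nth_le_iff_le_mu hA hi (hiG.trans hcard) _).2 <|
      ((nth_le_iff_le_mu hG hi hiG _).1 le_rfl).trans (h _)

lemma preceq_iff_forall_mu_le (hA : 0 ∉ A) (hG : 0 ∉ G) :
    preceq A G ↔ #G ≤ #A ∧ ∀ l, mu G l ≤ mu A l :=
  and_congr_right (forall_nth_le_iff_forall_mu_le hA hG)

lemma eLE_iff_forall_mu_le (hA : 0 ∉ A) (hG : 0 ∉ G) :
    eLE A G ↔ #A = #G ∧ ∀ l, mu G l ≤ mu A l :=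
  and_congr_right fun h => forall_nth_le_iff_forall_mu_le hA hG h.ge

lemma inter_nonempty_of_lt_mu_add_mu (h : l < mu A l + mu B l) : (A ∩ B).Nonempty := by
  by_contra hAB
  rw [← not_disjoint_iff_nonempty_inter, not_not] at hAB
  have hdisj : Disjoint (A ∩ Icc 1 l) (B ∩ Icc 1 l) := hAB.mono inter_subset_left inter_subset_left
  have := card_le_card (union_subset (s := A ∩ Icc 1 l) (t := B ∩ Icc 1 l) inter_subset_right
    inter_subset_right)
  rw [card_union_of_disjoint hdisj, Nat.card_Icc] at this
  unfold mu at h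
  omega

end mu

section compression

variable {A B G H : Finset ℕ} {n k : ℕ}

lemma mu_le_mu_image {f : ℕ → ℕ} (hf : Set.InjOn f G) (hfG : ∀ x ∈ G, f x ∈ Icc 1 x) (l : ℕ) :
    mu G l ≤ mu (G.image f) l := by
  calc mu G l = #((G ∩ Icc 1 l).image f) :=
        (card_image_of_injOn (hf.mono (coe_subset.2 inter_subset_left))).symm
    _ ≤ mu (G.image f) l := card_le_card <| by
        intro y hy
        obtain ⟨x, hx, rfl⟩ := mem_image.1 hy
        have hfx := mem_Icc.1 (hfG x (mem_inter.1 hx).1)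
        have hxl := mem_Icc.1 (mem_inter.1 hx).2
        exact mem_inter.2 ⟨mem_image_of_mem f (mem_inter.1 hx).1, mem_Icc.2 ⟨hfx.1, by omega⟩⟩

lemma image_subset_Icc_one {f : ℕ → ℕ} (hG : G ⊆ Icc 1 n) (hfG : ∀ x ∈ G, f x ∈ Icc 1 x) :
    G.image f ⊆ Icc 1 n := by
  intro y hy
  obtain ⟨x, hx, rfl⟩ := mem_image.1 hy
  exact Icc_subset_Icc le_rfl (mem_Icc.1 (hG hx)).2 (hfG x hx)

lemma exists_disjoint_mu_le (hG : G ⊆ Icc 1 n) (hH : H ⊆ Icc 1 n)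
    (h : ∀ l ∈ Icc 1 n, mu G l + mu H l ≤ l) :
    ∃ G' H', G' ⊆ Icc 1 n ∧ H' ⊆ Icc 1 n ∧ Disjoint G' H' ∧ #G' = #G ∧ #H' = #H ∧
      (∀ l, mu G l ≤ mu G' l) ∧ ∀ l, mu H l ≤ mu H' l := by
  -- the positions of `x ∈ G` and `y ∈ H` in the merge of `G` and `H`
  set rG : ℕ → ℕ := fun x => mu G x + mu H (x - 1)
  set rH : ℕ → ℕ := fun y => mu G y + mu H y
  have hG1 : ∀ x ∈ G, 1 ≤ x := fun x hx => (mem_Icc.1 (hG hx)).1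
  have hH1 : ∀ y ∈ H, 1 ≤ y := fun y hy => (mem_Icc.1 (hH hy)).1
  have hrG : ∀ x ∈ G, rG x ∈ Icc 1 x := fun x hx => by
    have := mu_pos_of_mem hx (hG1 x hx)
    have := mu_mono H (Nat.sub_le x 1)
    have := h x (hG hx)
    simp only [rG, mem_Icc]
    omega
  have hrH : ∀ y ∈ H, rH y ∈ Icc 1 y := fun y hy => by
    have := mu_pos_of_mem hy (hH1 y hy)
    have := h y (hH hy)
    simp only [rH, mem_Icc]
    omega
  have hrG_mono : StrictMonoOn rG G := fun x _ y hy hxy => by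
    have := mu_lt_mu_of_mem (mem_coe.1 hy) hxy
    have := mu_mono H (Nat.sub_le_sub_right hxy.le 1)
    simp only [rG]
    omega
  have hrH_mono : StrictMonoOn rH H := fun x _ y hy hxy => by
    have := mu_lt_mu_of_mem (mem_coe.1 hy) hxy
    have := mu_mono G hxy.le
    simp only [rH]
    omega
  have hrGH : ∀ x ∈ G, ∀ y ∈ H, rG x ≠ rH y := fun x hx y hy => by
    simp only [rG, rH]
    rcases lt_or_ge y x with hyx | hxy
    · have := mu_lt_mu_of_mem hx hyx
      have := mu_mono H (Nat.le_sub_one_of_lt hyx)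
      omega
    · have := mu_lt_mu_of_mem hy (show x - 1 < y by have := hG1 x hx; omega)
      have := mu_mono G hxy
      omega
  refine ⟨G.image rG, H.image rH, image_subset_Icc_one hG hrG, image_subset_Icc_one hH hrH,
    ?_, card_image_of_injOn hrG_mono.injOn, card_image_of_injOn hrH_mono.injOn,
    mu_le_mu_image hrG_mono.injOn hrG, mu_le_mu_image hrH_mono.injOn hrH⟩
  simp only [disjoint_left, mem_image]
  rintro _ ⟨x, hx, rfl⟩ ⟨y, hy, hxy⟩
  exact hrGH x hx y hy hxy.symm

lemma exists_disjoint_supersets_card_eq {s : Finset ℕ} (hA : A ⊆ s) (hB : B ⊆ s)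
    (hAB : Disjoint A B) (hAk : #A ≤ k) (hBk : #B ≤ k) (hs : 2 * k ≤ #s) :
    ∃ A' B', A ⊆ A' ∧ B ⊆ B' ∧ A' ⊆ s ∧ B' ⊆ s ∧ Disjoint A' B' ∧ #A' = k ∧ #B' = k := by
  set C := s \ (A ∪ B)
  have hC : #C = #s - (#A + #B) := by
    rw [card_sdiff_of_subset (union_subset hA hB), card_union_of_disjoint hAB]
  obtain ⟨C₁, hC₁, hC₁k⟩ := exists_subset_card_eq (s := C) (n := k - #A) (by omega)
  obtain ⟨C₂, hC₂, hC₂k⟩ := exists_subset_card_eq (s := C \ C₁) (n := k - #B)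
    (by rw [card_sdiff_of_subset hC₁]; omega)
  have hC₂C : C₂ ⊆ C := hC₂.trans sdiff_subset
  have hCA : Disjoint C A := disjoint_sdiff_self_left.mono_right subset_union_left
  have hCB : Disjoint C B := disjoint_sdiff_self_left.mono_right subset_union_right
  refine ⟨A ∪ C₁, B ∪ C₂, subset_union_left, subset_union_left,
    union_subset hA (hC₁.trans sdiff_subset), union_subset hB (hC₂C.trans sdiff_subset), ?_,
    ?_, ?_⟩
  · refine disjoint_union_left.2 ⟨disjoint_union_right.2 ⟨hAB, ?_⟩,
      disjoint_union_right.2 ⟨?_, ?_⟩⟩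
    · exact (hCA.mono_left hC₂C).symm
    · exact hCB.mono_left hC₁
    · exact (disjoint_sdiff_self_left.mono_left hC₂).symm
  · rw [card_union_of_disjoint (hCA.mono_left hC₁).symm]; omega
  · rw [card_union_of_disjoint (hCB.mono_left hC₂C).symm]; omega

end compression

section characterization

variable {G H : Finset ℕ} {n k : ℕ}

lemma sInt_iff_exists_lt_mu_add_mu (hG : G ⊆ Icc 1 n) (hH : H ⊆ Icc 1 n) :
    sInt n G H ↔ ∃ l ∈ Icc 1 n, l < mu G l + mu H l := by
  have hG0 := zero_notMem_of_subset_Icc_one hG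
  have hH0 := zero_notMem_of_subset_Icc_one hH
  constructor
  · intro hs
    by_contra! hmu
    obtain ⟨G', H', hG', hH', hdisj, hG'c, hH'c, hG'mu, hH'mu⟩ := exists_disjoint_mu_le hG hH hmu
    exact not_disjoint_iff_nonempty_inter.2 (hs G' H' hG' hH'
      ((eLE_iff_forall_mu_le (zero_notMem_of_subset_Icc_one hG') hG0).2 ⟨hG'c, hG'mu⟩)
      ((eLE_iff_forall_mu_le (zero_notMem_of_subset_Icc_one hH') hH0).2 ⟨hH'c, hH'mu⟩)) hdisj
  · rintro ⟨l, -, hl⟩ G' H' hG' hH' hGG' hHH'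
    have := ((eLE_iff_forall_mu_le (zero_notMem_of_subset_Icc_one hG') hG0).1 hGG').2 l
    have := ((eLE_iff_forall_mu_le (zero_notMem_of_subset_Icc_one hH') hH0).1 hHH').2 l
    exact inter_nonempty_of_lt_mu_add_mu (l := l) (by omega)

lemma mem_Fam_singleton {A : Finset ℕ} :
    A ∈ Fam n k {G} ↔ A ⊆ Icc 1 n ∧ #A = k ∧ preceq A G := by
  simp [Fam]

lemma forall_mem_Fam_inter_nonempty_iff (hn : 2 * k ≤ n) (hG : G ⊆ Icc 1 n)
    (hH : H ⊆ Icc 1 n) (hGc : #G ≤ k) (hHc : #H ≤ k) :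
    (∀ A ∈ Fam n k {G}, ∀ B ∈ Fam n k {H}, (A ∩ B).Nonempty) ↔
      ∃ l ∈ Icc 1 n, l < mu G l + mu H l := by
  have hG0 := zero_notMem_of_subset_Icc_one hG
  have hH0 := zero_notMem_of_subset_Icc_one hH
  simp only [mem_Fam_singleton]
  constructor
  · intro hs
    by_contra! hmu
    obtain ⟨G', H', hG', hH', hdisj, hG'c, hH'c, hG'mu, hH'mu⟩ := exists_disjoint_mu_le hG hH hmu
    obtain ⟨A, B, hGA, hHB, hA, hB, hAB, hAk, hBk⟩ := exists_disjoint_supersets_card_eq (k := k)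
      hG' hH' hdisj (by omega) (by omega) (by rw [Nat.card_Icc]; omega)
    refine not_disjoint_iff_nonempty_inter.2 (hs A ⟨hA, hAk, ?_⟩ B ⟨hB, hBk, ?_⟩) hAB
    · exact (preceq_iff_forall_mu_le (zero_notMem_of_subset_Icc_one hA) hG0).2
        ⟨by omega, fun l => (hG'mu l).trans (mu_le_mu_of_subset hGA l)⟩
    · exact (preceq_iff_forall_mu_le (zero_notMem_of_subset_Icc_one hB) hH0).2
        ⟨by omega, fun l => (hH'mu l).trans (mu_le_mu_of_subset hHB l)⟩
  · rintro ⟨l, -, hl⟩ A ⟨hA, -, hAG⟩ B ⟨hB, -, hBH⟩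
    have := ((preceq_iff_forall_mu_le (zero_notMem_of_subset_Icc_one hA) hG0).1 hAG).2 l
    have := ((preceq_iff_forall_mu_le (zero_notMem_of_subset_Icc_one hB) hH0).1 hBH).2 l
    exact inter_nonempty_of_lt_mu_add_mu (l := l) (by omega)

end characterization

theorem stmt6_general (n k : ℕ) (hn : 2 * k ≤ n) (G H : Finset ℕ)
    (hG : G ⊆ Finset.Icc 1 n) (hH : H ⊆ Finset.Icc 1 n)
    (hGc : G.card ≤ k) (hHc : H.card ≤ k) :
    (sInt n G H ↔ ∀ A ∈ Fam n k {G}, ∀ B ∈ Fam n k {H}, (A ∩ B).Nonempty) ∧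
    ((∀ A ∈ Fam n k {G}, ∀ B ∈ Fam n k {H}, (A ∩ B).Nonempty) ↔
      ∃ l ∈ Finset.Icc 1 n, l < mu G l + mu H l) := by
  have hFam := forall_mem_Fam_inter_nonempty_iff hn hG hH hGc hHc
  exact ⟨(sInt_iff_exists_lt_mu_add_mu hG hH).trans hFam.symm, hFam⟩

theorem stmt6 (n k : ℕ) (h4 : 4 ≤ 2 * k) (hn : 2 * k ≤ n) (G H : Finset ℕ)
    (hG : G ⊆ Finset.Icc 1 n) (hH : H ⊆ Finset.Icc 1 n)
    (hGc : G.card ≤ k) (hHc : H.card ≤ k) :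
    (sInt n G H ↔ ∀ A ∈ Fam n k {G}, ∀ B ∈ Fam n k {H}, (A ∩ B).Nonempty) ∧
    ((∀ A ∈ Fam n k {G}, ∀ B ∈ Fam n k {H}, (A ∩ B).Nonempty) ↔
      ∃ l ∈ Finset.Icc 1 n, l < mu G l + mu H l) :=
  stmt6_general n k hn G H hG hH hGc hHc
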